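/- Column sums versus row sums of the weight matrix: Σ_{k=1}^n (p_k·w(i,k) − q_k·w(i,k−1)) = p_1⋯p_n − q_1⋯q_n for every fixed row i ∈ {1,...,n} (with w(i,0) := w(i,n)). -/

import Mathlib

/-! For a fixed row `i`, every term of the sum with `k ≠ i` vanishes: moving the column index
from `k - 1` to `k` trades the factor `q k` for `p k` in `w(i, ·)`, so `p k * w(i,k) = q k * w(i,k-1)`.
The remaining term `p i * w(i,i) - q i * w(i,i-1)` is `∏ p - ∏ q`, since `w(i,i)` is `∏ p` with
`p i` removed and `w(i,i-1)` is `∏ q` with `q i` removed. -/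

open Finset

/-- The weight `w(i,k)` of the two-species disordered ASEP. -/
noncomputable def asepWeight {R : Type*} [CommRing R] (p q : ℕ → R) (n i k : ℕ) : R :=
  if i ≤ k then
    (∏ j ∈ Icc 1 (i-1), p j) * (∏ j ∈ Icc (i+1) k, q j) * (∏ j ∈ Icc (k+1) n, p j)
  else
    (∏ j ∈ Icc 1 k, q j) * (∏ j ∈ Icc (k+1) (i-1), p j) * (∏ j ∈ Icc (i+1) n, q j)

section IntervalProducts

variable {M : Type*} [CommMonoid M] (f : ℕ → M) {a m b : ℕ}

lemma prod_Icc_eq_mul_prod_Icc_succ (h : a ≤ b) :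
    ∏ j ∈ Icc a b, f j = f a * ∏ j ∈ Icc (a + 1) b, f j := by
  rw [Icc_eq_cons_Ioc h, prod_cons, Icc_add_one_left_eq_Ioc]

lemma prod_Icc_succ_consecutive (ham : a ≤ m) (hmb : m ≤ b) :
    (∏ j ∈ Icc (a + 1) m, f j) * ∏ j ∈ Icc (m + 1) b, f j = ∏ j ∈ Icc (a + 1) b, f j := by
  simpa only [Icc_add_one_left_eq_Ioc] using prod_Ioc_consecutive f ham hmb

lemma prod_Icc_one_eq_mul_mul (hmb : m < b) :
    ∏ j ∈ Icc 1 b, f j = (∏ j ∈ Icc 1 m, f j) * f (m + 1) * ∏ j ∈ Icc (m + 2) b, f j := by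
  rw [← prod_Icc_succ_consecutive f m.zero_le hmb.le, prod_Icc_eq_mul_prod_Icc_succ f hmb, mul_assoc]

end IntervalProducts

section AsepWeight

variable {R : Type*} [CommRing R] (p q : ℕ → R) {n i : ℕ}

lemma asepWeight_zero (hi : 1 ≤ i) (hin : i ≤ n) :
    asepWeight p q n i 0 = asepWeight p q n i n := by
  rw [asepWeight, asepWeight, if_neg (by omega), if_pos hin, zero_add,
    Icc_eq_empty_of_lt Nat.zero_lt_one, Icc_eq_empty_of_lt (Nat.lt_add_one n), prod_empty, prod_empty]
  ring

lemma p_mul_asepWeight_succ {m : ℕ} (hmi : m + 1 ≠ i) (hmn : m < n) :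
    p (m + 1) * asepWeight p q n i (m + 1) = q (m + 1) * asepWeight p q n i m := by
  rcases lt_or_gt_of_ne hmi.symm with hlt | hgt
  · rw [asepWeight, asepWeight, if_pos (by omega), if_pos (by omega),
      prod_Icc_succ_top (by omega), prod_Icc_eq_mul_prod_Icc_succ p (by omega : m + 1 ≤ n)]
    ring
  · rw [asepWeight, asepWeight, if_neg (by omega), if_neg (by omega),
      prod_Icc_succ_top (by omega), prod_Icc_eq_mul_prod_Icc_succ p (by omega : m + 1 ≤ i - 1)]
    ring

lemma p_mul_asepWeight_self_sub (hi : 1 ≤ i) (hin : i ≤ n) :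
    p i * asepWeight p q n i i - q i * asepWeight p q n i (i - 1) =
      (∏ j ∈ Icc 1 n, p j) - ∏ j ∈ Icc 1 n, q j := by
  obtain ⟨m, rfl⟩ := Nat.exists_eq_add_of_le' hi
  rw [asepWeight, asepWeight, if_pos le_rfl, if_neg (by omega), Nat.add_sub_cancel,
    Icc_eq_empty_of_lt (Nat.lt_add_one (m + 1)), Icc_eq_empty_of_lt (Nat.lt_add_one m),
    prod_Icc_one_eq_mul_mul p hin, prod_Icc_one_eq_mul_mul q hin, prod_empty, prod_empty]
  ring

end AsepWeight

theorem stmt_19_general {R : Type*} [CommRing R] (n : ℕ) (p q : ℕ → R)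
    (i : ℕ) (hi : i ∈ Icc 1 n) :
    (∑ k ∈ Icc 1 n,
        (p k * asepWeight p q n i k -
          q k * asepWeight p q n i (if k = 1 then n else k - 1))) =
      (∏ j ∈ Icc 1 n, p j) - (∏ j ∈ Icc 1 n, q j) := by
  obtain ⟨hi1, hin⟩ := mem_Icc.mp hi
  have hwrap : ∀ k,
      asepWeight p q n i (if k = 1 then n else k - 1) = asepWeight p q n i (k - 1) := by
    intro k
    split_ifs with hk
    · rw [hk, Nat.sub_self, asepWeight_zero p q hi1 hin]
    · rfl
  rw [sum_congr rfl fun k _ => by rw [hwrap k],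
    sum_eq_single_of_mem i hi fun k hk hki => ?_, p_mul_asepWeight_self_sub p q hi1 hin]
  obtain ⟨m, rfl⟩ := Nat.exists_eq_add_of_le' (mem_Icc.mp hk).1
  rw [Nat.add_sub_cancel, p_mul_asepWeight_succ p q hki (mem_Icc.mp hk).2, sub_self]

theorem stmt_19 {R : Type*} [CommRing R] (n : ℕ) (hn : 1 ≤ n) (p q : ℕ → R)
    (i : ℕ) (hi : i ∈ Icc 1 n) :
    (∑ k ∈ Icc 1 n,
        (p k * asepWeight p q n i k -
          q k * asepWeight p q n i (if k = 1 then n else k - 1))) =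
      (∏ j ∈ Icc 1 n, p j) - (∏ j ∈ Icc 1 n, q j) :=
  stmt_19_general n p q i hi
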